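/- Let K₀, K₁ be symmetric positive definite n×n matrices and t ∈ [0,1]. For ε > 0 define the entropic interpolant covariance K_t^ε = (1−t)²·K₀ + t²·K₁ + t(1−t)·(R₀₁(ε) + R₁₀(ε)), where R₀₁(ε) = K₀^{1/2}((ε²/16)·I + K₀^{1/2}K₁K₀^{1/2})^{1/2}K₀^{−1/2} and R₁₀(ε) = K₁^{1/2}((ε²/16)·I + K₁^{1/2}K₀K₁^{1/2})^{1/2}K₁^{−1/2}. Then, as ε → 0⁺, K_t^ε converges to the 2-Wasserstein geodesic covariance K_t = (1−t)²·K₀ + t²·K₁ + t(1−t)·(K₀^{1/2}(K₀^{1/2}K₁K₀^{1/2})^{1/2}K₀^{−1/2} + K₁^{1/2}(K₁^{1/2}K₀K₁^{1/2})^{1/2}K₁^{−1/2}). -/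

import Mathlib

/-!
Each regularized root is the square root of a positive semidefinite matrix `M` shifted by
`(ε² / 16) • 1`. In the continuous functional calculus, `√(r • 1 + M)` is the function
`x ↦ √(r + x)` applied to `M`, and these translates of `√` converge to `√` uniformly on the
compact spectrum of `M` as `r → 0`; hence the shifted roots converge to `√M`, and so does
everything built from them by multiplication with fixed matrices and linear combination.
-/

open Matrix
open scoped Classical

noncomputable section

/-- The unique symmetric positive semidefinite square root of a positive
semidefinite matrix (junk value `0` otherwise). -/
def sqrtm {n : ℕ} (A : Matrix (Fin n) (Fin n) ℝ) : Matrix (Fin n) (Fin n) ℝ :=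
  if h : A.PosSemidef then
    (h.1.eigenvectorUnitary : Matrix (Fin n) (Fin n) ℝ) *
      diagonal ((↑) ∘ Real.sqrt ∘ h.1.eigenvalues) *
      (star h.1.eigenvectorUnitary : Matrix (Fin n) (Fin n) ℝ)
  else 0

end

open Filter Topology

theorem continuous_cfc_algebraMap_add {A : Type*} [Ring A] [StarRing A] [TopologicalSpace A]
    [Algebra ℝ A] [ContinuousFunctionalCalculus ℝ A IsSelfAdjoint] [ContinuousMap.UniqueHom ℝ A]
    {f : ℝ → ℝ} (hf : Continuous f) {a : A} (ha : IsSelfAdjoint a) :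
    Continuous fun r : ℝ => cfc f (algebraMap ℝ A r + a) := by
  have hshift (r : ℝ) : cfc f (algebraMap ℝ A r + a) = cfc (fun x => f (r + x)) a := by
    rw [cfc_comp' f (r + ·) a, cfc_const_add r (fun x => x) a, cfc_id' ℝ a]
  simp_rw [hshift]
  -- the compact-open topology on `C(ℝ, ℝ)` is that of uniform convergence on compact sets
  let F : C(ℝ, C(ℝ, ℝ)) := ContinuousMap.curry ⟨fun p : ℝ × ℝ => f (p.1 + p.2), by fun_prop⟩
  refine continuous_iff_continuousAt.2 fun r => tendsto_cfc_fun ?_ (.of_forall fun _ => by fun_prop)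
  exact ContinuousMap.tendsto_iff_forall_isCompact_tendstoUniformlyOn.1 (F.continuous.tendsto r) _
    (ContinuousFunctionalCalculus.isCompact_spectrum a)

namespace Matrix

variable {n : ℕ}

theorem sqrtm_eq_cfc {A : Matrix (Fin n) (Fin n) ℝ} (hA : A.PosSemidef) :
    sqrtm A = cfc Real.sqrt A := by
  rw [hA.1.cfc_eq, sqrtm, dif_pos hA]
  rfl

theorem PosSemidef.sqrtm_mul_mul_sqrtm {K L : Matrix (Fin n) (Fin n) ℝ} (hK : K.PosSemidef)
    (hL : L.PosSemidef) : (sqrtm K * L * sqrtm K).PosSemidef := by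
  have hself : (sqrtm K)ᴴ = sqrtm K := by
    rw [sqrtm_eq_cfc hK]
    exact cfc_predicate Real.sqrt K
  simpa only [hself] using hL.mul_mul_conjTranspose_same (sqrtm K)

theorem tendsto_sqrtm_smul_one_add {M : Matrix (Fin n) (Fin n) ℝ} (hM : M.PosSemidef) :
    Tendsto (fun r : ℝ => sqrtm (r • 1 + M)) (𝓝[≥] 0) (𝓝 (sqrtm M)) := by
  have hcont := continuous_cfc_algebraMap_add Real.continuous_sqrt hM.1.isSelfAdjoint
  have hlim := (hcont.tendsto 0).mono_left (nhdsWithin_le_nhds (s := Set.Ici 0))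
  rw [map_zero, zero_add, ← sqrtm_eq_cfc hM] at hlim
  refine hlim.congr' ?_
  filter_upwards [self_mem_nhdsWithin] with r (hr : 0 ≤ r)
  rw [sqrtm_eq_cfc ((PosSemidef.one.smul hr).add hM), Algebra.algebraMap_eq_smul_one]

end Matrix

theorem stmt_15_general {n : ℕ} (K₀ K₁ : Matrix (Fin n) (Fin n) ℝ)
    (hK₀ : K₀.PosDef) (hK₁ : K₁.PosDef) (t : ℝ)
    (R₀₁ R₁₀ : ℝ → Matrix (Fin n) (Fin n) ℝ) (Kt : ℝ → Matrix (Fin n) (Fin n) ℝ)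
    (hR₀₁ : ∀ ε, R₀₁ ε =
      sqrtm K₀ * sqrtm ((ε ^ 2 / 16) • 1 + sqrtm K₀ * K₁ * sqrtm K₀) * (sqrtm K₀)⁻¹)
    (hR₁₀ : ∀ ε, R₁₀ ε =
      sqrtm K₁ * sqrtm ((ε ^ 2 / 16) • 1 + sqrtm K₁ * K₀ * sqrtm K₁) * (sqrtm K₁)⁻¹)
    (hKt : ∀ ε, Kt ε = (1 - t) ^ 2 • K₀ + t ^ 2 • K₁ + (t * (1 - t)) • (R₀₁ ε + R₁₀ ε)) :
    Filter.Tendsto Kt (nhdsWithin 0 (Set.Ioi 0))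
      (nhds ((1 - t) ^ 2 • K₀ + t ^ 2 • K₁ + (t * (1 - t)) •
        (sqrtm K₀ * sqrtm (sqrtm K₀ * K₁ * sqrtm K₀) * (sqrtm K₀)⁻¹ +
          sqrtm K₁ * sqrtm (sqrtm K₁ * K₀ * sqrtm K₁) * (sqrtm K₁)⁻¹))) := by
  have hshift : Tendsto (fun ε : ℝ => ε ^ 2 / 16) (𝓝[>] 0) (𝓝[≥] 0) :=
    tendsto_nhdsWithin_iff.2
      ⟨(Continuous.tendsto' (by fun_prop) 0 0 (by norm_num)).mono_left nhdsWithin_le_nhds,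
        .of_forall fun ε => Set.mem_Ici.2 (by positivity)⟩
  have hR {K L : Matrix (Fin n) (Fin n) ℝ} (hK : K.PosSemidef) (hL : L.PosSemidef) :
      Tendsto (fun ε : ℝ => sqrtm K * sqrtm ((ε ^ 2 / 16) • 1 + sqrtm K * L * sqrtm K) * (sqrtm K)⁻¹)
        (𝓝[>] 0) (𝓝 (sqrtm K * sqrtm (sqrtm K * L * sqrtm K) * (sqrtm K)⁻¹)) :=
    (((tendsto_sqrtm_smul_one_add (hK.sqrtm_mul_mul_sqrtm hL)).comp hshift).const_mul _).mul_const _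
  rw [funext hKt, funext hR₀₁, funext hR₁₀]
  exact tendsto_const_nhds.add
    (((hR hK₀.posSemidef hK₁.posSemidef).add (hR hK₁.posSemidef hK₀.posSemidef)).const_smul _)

theorem stmt_15 {n : ℕ} (K₀ K₁ : Matrix (Fin n) (Fin n) ℝ)
    (hK₀ : K₀.PosDef) (hK₁ : K₁.PosDef) (t : ℝ) (ht : t ∈ Set.Icc (0 : ℝ) 1)
    (R₀₁ R₁₀ : ℝ → Matrix (Fin n) (Fin n) ℝ) (Kt : ℝ → Matrix (Fin n) (Fin n) ℝ)
    (hR₀₁ : ∀ ε, R₀₁ ε =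
      sqrtm K₀ * sqrtm ((ε ^ 2 / 16) • 1 + sqrtm K₀ * K₁ * sqrtm K₀) * (sqrtm K₀)⁻¹)
    (hR₁₀ : ∀ ε, R₁₀ ε =
      sqrtm K₁ * sqrtm ((ε ^ 2 / 16) • 1 + sqrtm K₁ * K₀ * sqrtm K₁) * (sqrtm K₁)⁻¹)
    (hKt : ∀ ε, Kt ε = (1 - t) ^ 2 • K₀ + t ^ 2 • K₁ + (t * (1 - t)) • (R₀₁ ε + R₁₀ ε)) :
    Filter.Tendsto Kt (nhdsWithin 0 (Set.Ioi 0))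
      (nhds ((1 - t) ^ 2 • K₀ + t ^ 2 • K₁ + (t * (1 - t)) •
        (sqrtm K₀ * sqrtm (sqrtm K₀ * K₁ * sqrtm K₀) * (sqrtm K₀)⁻¹ +
          sqrtm K₁ * sqrtm (sqrtm K₁ * K₀ * sqrtm K₁) * (sqrtm K₁)⁻¹))) :=
  stmt_15_general K₀ K₁ hK₀ hK₁ t R₀₁ R₁₀ Kt hR₀₁ hR₁₀ hKt
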